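/- Let (N,c,E,P) be a bankruptcy problem with a priori unions, i ∈ N with c_i > 0, ε > 0 and α ∈ (0,1). Let ℓ ≥ 1 and equip Π_P(N)^ℓ with the ℓ-fold product of the uniform probability measure on Π_P(N); define the estimator RA̅^P_i(σ_1,…,σ_ℓ) = (1/ℓ) Σ_{k=1}^{ℓ} x(σ_k)_i. If ℓ ≥ min{ 1/(4αε²), ln(2/α)/(2ε²) } · c_i², then ℙ( |RA̅^P_i − RA^P_i| ≥ ε ) ≤ α. -/

import Mathlib

open Finset
open scoped Classical

/-- The set of predecessors of `i` under the permutation `σ`. -/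
def preds {N : Type} [Fintype N] (σ : N ≃ Fin (Fintype.card N)) (i : N) : Finset N :=
  Finset.univ.filter (fun j => σ j < σ i)

/-- The marginal payment `x(σ)_i = min (c i) (max 0 (E - ∑_{j ∈ P_i^σ} c j))`. -/
noncomputable def payment {N : Type} [Fintype N] (c : N → ℝ) (E : ℝ)
    (σ : N ≃ Fin (Fintype.card N)) (i : N) : ℝ :=
  min (c i) (max 0 (E - ∑ j ∈ preds σ i, c j))

/-- A permutation `σ` of `N` is compatible with the partition `P` if whenever `i` and
`j` lie in the same block and `σ i < σ k < σ j`, then `k` lies in that same block. -/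
def Compatible {N : Type} [Fintype N] [DecidableEq N]
    (P : Finpartition (Finset.univ : Finset N)) (σ : N ≃ Fin (Fintype.card N)) : Prop :=
  ∀ i j k : N, (∃ B ∈ P.parts, i ∈ B ∧ j ∈ B) → σ i < σ k → σ k < σ j →
    ∃ B ∈ P.parts, i ∈ B ∧ j ∈ B ∧ k ∈ B

/-- `Π_P(N)`: the finite set of permutations of `N` compatible with `P`. -/
noncomputable def compatPerms {N : Type} [Fintype N] [DecidableEq N]
    (P : Finpartition (Finset.univ : Finset N)) : Finset (N ≃ Fin (Fintype.card N)) :=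
  Finset.univ.filter (fun σ => Compatible P σ)

/-- The RA-random arrival rule with a priori unions:
`RA^P_i = (1/|Π_P(N)|) ∑_{σ ∈ Π_P(N)} x(σ)_i`. -/
noncomputable def RAU {N : Type} [Fintype N] [DecidableEq N]
    (c : N → ℝ) (E : ℝ) (P : Finpartition (Finset.univ : Finset N)) (i : N) : ℝ :=
  (1 / ((compatPerms P).card : ℝ)) * ∑ σ ∈ compatPerms P, payment c E σ i

/-- The estimator: the mean of the marginal payments of `i` over a sample
`ω = (σ_1, …, σ_ℓ)` of `ℓ` compatible permutations. -/
noncomputable def estimator {N : Type} [Fintype N] [DecidableEq N]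
    (c : N → ℝ) (E : ℝ) (P : Finpartition (Finset.univ : Finset N)) (i : N)
    (ℓ : ℕ) (ω : Fin ℓ → {σ : N ≃ Fin (Fintype.card N) // σ ∈ compatPerms P}) : ℝ :=
  (1 / (ℓ : ℝ)) * ∑ k : Fin ℓ, payment c E (ω k).1 i

/-!
The payments `x(σ)_i` lie in `[0, c_i]`, and the estimator is the empirical mean of `ℓ`
independent uniform draws of them, whose expectation is `RA^P_i`. Chebyshev's inequality together
with Popoviciu's bound `Var ≤ c_i² / 4` bounds the deviation probability by `c_i² / (4 ℓ ε²)`, and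
Hoeffding's inequality bounds it by `2 exp (-2 ℓ ε² / c_i²)`. The sample-size hypothesis says
precisely that the smaller of the two bounds is at most `α`.
-/

open MeasureTheory ProbabilityTheory Real

noncomputable def sampleMean {S : Type*} (X : S → ℝ) (ℓ : ℕ) (ω : Fin ℓ → S) : ℝ :=
  (1 / (ℓ : ℝ)) * ∑ k, X (ω k)

section Concentration

variable {S : Type*} [MeasurableSpace S] {ν : Measure S} [IsProbabilityMeasure ν]
  {X : S → ℝ} {a b : ℝ} {ℓ : ℕ}

lemma integral_sampleMean (hX : Integrable X ν) (hℓ : ℓ ≠ 0) :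
    ∫ ω, sampleMean X ℓ ω ∂(Measure.pi fun _ : Fin ℓ ↦ ν) = ∫ x, X x ∂ν := by
  simp only [sampleMean]
  rw [integral_const_mul, integral_finsetSum _ fun k _ ↦ integrable_comp_eval hX]
  simp only [integral_comp_eval (μ := fun _ : Fin ℓ ↦ ν) hX.1, sum_const, card_univ,
    Fintype.card_fin, nsmul_eq_mul]
  field_simp

lemma variance_sampleMean (hX : MemLp X 2 ν) :
    Var[sampleMean X ℓ; Measure.pi fun _ : Fin ℓ ↦ ν] = Var[X; ν] / ℓ := by
  have hsum : (fun ω : Fin ℓ → S ↦ ∑ k, X (ω k)) = ∑ k, fun ω ↦ X (ω k) := by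
    ext ω; simp
  unfold sampleMean
  rw [variance_const_mul, hsum, variance_sum_pi fun _ ↦ hX]
  simp only [sum_const, card_univ, Fintype.card_fin, nsmul_eq_mul]
  rcases eq_or_ne ℓ 0 with rfl | hℓ
  · simp
  · field_simp

lemma memLp_sampleMean (hX : MemLp X 2 ν) :
    MemLp (sampleMean X ℓ) 2 (Measure.pi fun _ : Fin ℓ ↦ ν) :=
  (memLp_finsetSum univ fun k _ ↦
    hX.comp_measurePreserving (measurePreserving_eval _ k)).const_mul _

lemma measureReal_abs_sampleMean_sub_ge_le_div_sq (hX : AEMeasurable X ν)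
    (hXab : ∀ᵐ x ∂ν, X x ∈ Set.Icc a b) (hℓ : ℓ ≠ 0) {ε : ℝ} (hε : 0 < ε) :
    (Measure.pi fun _ : Fin ℓ ↦ ν).real {ω | ε ≤ |sampleMean X ℓ ω - ∫ x, X x ∂ν|} ≤
      (b - a) ^ 2 / (4 * ℓ * ε ^ 2) := by
  have hX2 : MemLp X 2 ν := memLp_of_bounded hXab hX.aestronglyMeasurable 2
  have hchebyshev := meas_ge_le_variance_div_sq (memLp_sampleMean (ℓ := ℓ) hX2) hε
  rw [integral_sampleMean (hX2.integrable one_le_two) hℓ, variance_sampleMean hX2] at hchebyshev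
  refine ENNReal.toReal_le_of_le_ofReal (by positivity) (hchebyshev.trans ?_)
  refine ENNReal.ofReal_le_ofReal ?_
  calc Var[X; ν] / ℓ / ε ^ 2 ≤ ((b - a) / 2) ^ 2 / ℓ / ε ^ 2 := by
        gcongr; exact variance_le_sq_of_bounded hXab hX
    _ = (b - a) ^ 2 / (4 * ℓ * ε ^ 2) := by ring

lemma measureReal_sum_sub_integral_ge_le_exp (hX : AEMeasurable X ν)
    (hXab : ∀ᵐ x ∂ν, X x ∈ Set.Icc a b) {t : ℝ} (ht : 0 ≤ t) :
    (Measure.pi fun _ : Fin ℓ ↦ ν).real {ω | t ≤ ∑ k, (X (ω k) - ∫ x, X x ∂ν)} ≤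
      exp (-2 * t ^ 2 / (ℓ * (b - a) ^ 2)) := by
  have hsubG (k : Fin ℓ) : HasSubgaussianMGF (fun ω : Fin ℓ → S ↦ X (ω k) - ∫ x, X x ∂ν)
      ((‖b - a‖₊ / 2) ^ 2) (Measure.pi fun _ ↦ ν) := by
    have h : HasSubgaussianMGF (fun x ↦ X x - ∫ x, X x ∂ν) ((‖b - a‖₊ / 2) ^ 2)
        ((Measure.pi fun _ : Fin ℓ ↦ ν).map fun ω ↦ ω k) := by
      rw [(measurePreserving_eval _ k).map_eq]
      exact hasSubgaussianMGF_of_mem_Icc hX hXab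
    exact h.of_map (X := fun x ↦ X x - ∫ x, X x ∂ν) (measurable_pi_apply k).aemeasurable
  have hindep := iIndepFun_pi (μ := fun _ : Fin ℓ ↦ ν)
    (X := fun _ x ↦ X x - ∫ x, X x ∂ν) fun _ ↦ hX.sub_const _
  refine (HasSubgaussianMGF.measure_sum_ge_le_of_iIndepFun hindep
    (fun k _ ↦ hsubG k) ht).trans_eq ?_
  congr 1
  simp only [sum_const, card_univ, Fintype.card_fin, nsmul_eq_mul, NNReal.coe_mul,
    NNReal.coe_natCast, NNReal.coe_pow, NNReal.coe_div, coe_nnnorm, Real.norm_eq_abs,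
    NNReal.coe_ofNat, div_pow, sq_abs]
  rw [show 2 * (ℓ * ((b - a) ^ 2 / 2 ^ 2)) = ℓ * (b - a) ^ 2 / 2 by ring, div_div_eq_mul_div]
  ring

lemma measureReal_abs_sampleMean_sub_ge_le_two_mul_exp (hX : AEMeasurable X ν)
    (hXab : ∀ᵐ x ∂ν, X x ∈ Set.Icc a b) (hℓ : ℓ ≠ 0) {ε : ℝ} (hε : 0 ≤ ε) :
    (Measure.pi fun _ : Fin ℓ ↦ ν).real {ω | ε ≤ |sampleMean X ℓ ω - ∫ x, X x ∂ν|} ≤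
      2 * exp (-2 * ℓ * ε ^ 2 / (b - a) ^ 2) := by
  have hℓ' : (0 : ℝ) < ℓ := by positivity
  have hmean (ω : Fin ℓ → S) :
      sampleMean X ℓ ω - ∫ x, X x ∂ν = (∑ k, (X (ω k) - ∫ x, X x ∂ν)) / ℓ := by
    simp only [sampleMean, sum_sub_distrib, sum_const, card_univ, Fintype.card_fin, nsmul_eq_mul]
    field_simp
  have hneg (ω : Fin ℓ → S) :
      ∑ k, (-X (ω k) - ∫ x, -X x ∂ν) = -∑ k, (X (ω k) - ∫ x, X x ∂ν) := by
    simp only [integral_neg, ← sum_neg_distrib, neg_sub_neg, neg_sub]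
  have hupper := measureReal_sum_sub_integral_ge_le_exp (ℓ := ℓ) hX hXab
    (mul_nonneg hℓ'.le hε)
  have hlower := measureReal_sum_sub_integral_ge_le_exp (ℓ := ℓ) hX.neg
    (hXab.mono fun x hx ↦ ⟨neg_le_neg hx.2, neg_le_neg hx.1⟩) (mul_nonneg hℓ'.le hε)
  simp only [Pi.neg_apply, hneg, neg_sub_neg] at hlower
  have hexp : -2 * (ℓ * ε) ^ 2 / (ℓ * (b - a) ^ 2) = -2 * ℓ * ε ^ 2 / (b - a) ^ 2 := by
    rw [show -2 * (ℓ * ε) ^ 2 = ℓ * (-2 * ℓ * ε ^ 2) by ring, mul_div_mul_left _ _ hℓ'.ne']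
  rw [hexp] at hupper hlower
  calc _ ≤ (Measure.pi fun _ : Fin ℓ ↦ ν).real
          ({ω | ℓ * ε ≤ ∑ k, (X (ω k) - ∫ x, X x ∂ν)} ∪
            {ω | ℓ * ε ≤ -∑ k, (X (ω k) - ∫ x, X x ∂ν)}) := by
        refine measureReal_mono (fun ω hω ↦ ?_)
        simp only [Set.mem_ofPred_eq, hmean, abs_div, abs_of_pos hℓ', le_div_iff₀ hℓ'] at hω
        simpa only [Set.mem_union, Set.mem_ofPred_eq, mul_comm (ℓ : ℝ)] using le_abs.1 hω
    _ ≤ _ := (measureReal_union_le _ _).trans (by linarith)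

end Concentration

lemma card_filter_div_card_eq_measureReal_uniformOn {Ω : Type*} [Fintype Ω] [MeasurableSpace Ω]
    [MeasurableSingletonClass Ω] (p : Ω → Prop) [DecidablePred p] :
    (#{x | p x} : ℝ) / Fintype.card Ω = (uniformOn (Set.univ : Set Ω)).real {x | p x} := by
  have hp : {x | p x} = ((univ.filter p : Finset Ω) : Set Ω) := by ext; simp
  rw [measureReal_def, uniformOn_univ, hp, Measure.count_apply_finset,
    ENNReal.toReal_div, ENNReal.toReal_natCast, ENNReal.toReal_natCast]

lemma integral_uniformOn_univ {Ω : Type*} [Fintype Ω] [MeasurableSpace Ω]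
    [MeasurableSingletonClass Ω] (f : Ω → ℝ) :
    ∫ x, f x ∂uniformOn (Set.univ : Set Ω) = (∑ x, f x) / Fintype.card Ω := by
  rw [integral_fintype .of_finite, sum_div]
  refine sum_congr rfl fun x _ ↦ ?_
  rw [smul_eq_mul, measureReal_def, uniformOn_univ, Measure.count_singleton,
    ENNReal.toReal_div, ENNReal.toReal_natCast, ENNReal.toReal_one]
  ring

lemma min_tail_bound_le_of_le_sample_size {α ε C L : ℝ} (hα : 0 < α) (hε : 0 < ε) (hC : 0 < C)
    (hL : min (1 / (4 * α * ε ^ 2)) (log (2 / α) / (2 * ε ^ 2)) * C ^ 2 ≤ L) :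
    min (C ^ 2 / (4 * L * ε ^ 2)) (2 * exp (-2 * L * ε ^ 2 / C ^ 2)) ≤ α := by
  rcases le_total (1 / (4 * α * ε ^ 2)) (log (2 / α) / (2 * ε ^ 2)) with hmin | hmin
  · rw [min_eq_left hmin] at hL
    refine min_le_of_left_le ?_
    have hL' : C ^ 2 ≤ L * (4 * α * ε ^ 2) := by
      rwa [one_div_mul_eq_div, div_le_iff₀ (by positivity)] at hL
    have hLpos : 0 < L := lt_of_lt_of_le (by positivity) hL
    rw [div_le_iff₀ (by positivity)]
    linarith
  · rw [min_eq_right hmin] at hL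
    refine min_le_of_right_le ?_
    have hL' : log (2 / α) * C ^ 2 ≤ 2 * L * ε ^ 2 := by
      rw [div_mul_eq_mul_div, div_le_iff₀ (by positivity)] at hL
      linarith
    have hexp : -2 * L * ε ^ 2 / C ^ 2 ≤ -log (2 / α) := by
      rw [neg_mul, neg_mul, neg_div, neg_le_neg_iff, le_div_iff₀ (by positivity)]
      exact hL'
    calc 2 * exp (-2 * L * ε ^ 2 / C ^ 2) ≤ 2 * exp (-log (2 / α)) := by gcongr
      _ = α := by rw [exp_neg, exp_log (by positivity)]; field_simp

theorem min_sample_size_bound_general {N : Type} [Fintype N] [DecidableEq N]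
    (c : N → ℝ) (E : ℝ)
    (P : Finpartition (Finset.univ : Finset N)) (i : N) (hci : 0 < c i)
    (ε α : ℝ) (hε : 0 < ε) (hα0 : 0 < α)
    (ℓ : ℕ) (hℓ : 1 ≤ ℓ)
    (hsize : (ℓ : ℝ) ≥
      min (1 / (4 * α * ε ^ 2)) (Real.log (2 / α) / (2 * ε ^ 2)) * c i ^ 2) :
    ((Finset.univ.filter
        (fun ω : Fin ℓ → {σ : N ≃ Fin (Fintype.card N) // σ ∈ compatPerms P} =>
          ε ≤ |estimator c E P i ℓ ω - RAU c E P i|)).card : ℝ) /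
      (Fintype.card (Fin ℓ → {σ : N ≃ Fin (Fintype.card N) // σ ∈ compatPerms P}) : ℝ)
      ≤ α := by
  set S := {σ : N ≃ Fin (Fintype.card N) // σ ∈ compatPerms P}
  rcases isEmpty_or_nonempty S with hS | hS
  · have : IsEmpty (Fin ℓ → S) := ⟨fun ω ↦ hS.false (ω ⟨0, hℓ⟩)⟩
    simpa [Fintype.card_eq_zero] using hα0.le
  let : MeasurableSpace S := ⊤
  set X : S → ℝ := fun σ ↦ payment c E σ.1 i
  have hX : ∀ᵐ σ ∂uniformOn Set.univ, X σ ∈ Set.Icc 0 (c i) :=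
    ae_of_all _ fun σ ↦ ⟨le_min hci.le (le_max_left _ _), min_le_left _ _⟩
  have hRAU : RAU c E P i = ∫ σ, X σ ∂uniformOn Set.univ := by
    rw [integral_uniformOn_univ, RAU, Fintype.card_coe, one_div_mul_eq_div,
      sum_coe_sort (compatPerms P) fun σ ↦ payment c E σ i]
  have hestimator : estimator c E P i ℓ = sampleMean X ℓ := rfl
  have hℓ0 : ℓ ≠ 0 := by omega
  rw [card_filter_div_card_eq_measureReal_uniformOn, ← Set.pi_univ, uniformOn_pi, hestimator,
    hRAU]
  have hchebyshev := measureReal_abs_sampleMean_sub_ge_le_div_sq (by fun_prop) hX hℓ0 hε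
  have hhoeffding := measureReal_abs_sampleMean_sub_ge_le_two_mul_exp (by fun_prop) hX hℓ0 hε.le
  rw [sub_zero] at hchebyshev hhoeffding
  exact (le_min hchebyshev hhoeffding).trans
    (min_tail_bound_le_of_le_sample_size hα0 hε hci hsize)

/-- (Lemma 1 of the paper.) If the sample size satisfies
`ℓ ≥ min (1/(4 α ε²)) (ln(2/α)/(2 ε²)) · c i ²`, then under the `ℓ`-fold product of the
uniform probability measure on `Π_P(N)` (i.e. the uniform measure on the finite product
space), `ℙ(|RA̅^P_i − RA^P_i| ≥ ε) ≤ α`. -/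
theorem min_sample_size_bound {N : Type} [Fintype N] [DecidableEq N] [Nonempty N]
    (c : N → ℝ) (E : ℝ) (hc : ∀ i, 0 ≤ c i) (hE0 : 0 ≤ E) (hE : E ≤ ∑ j, c j)
    (P : Finpartition (Finset.univ : Finset N)) (i : N) (hci : 0 < c i)
    (ε α : ℝ) (hε : 0 < ε) (hα0 : 0 < α) (hα1 : α < 1)
    (ℓ : ℕ) (hℓ : 1 ≤ ℓ)
    (hsize : (ℓ : ℝ) ≥
      min (1 / (4 * α * ε ^ 2)) (Real.log (2 / α) / (2 * ε ^ 2)) * c i ^ 2) :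
    ((Finset.univ.filter
        (fun ω : Fin ℓ → {σ : N ≃ Fin (Fintype.card N) // σ ∈ compatPerms P} =>
          ε ≤ |estimator c E P i ℓ ω - RAU c E P i|)).card : ℝ) /
      (Fintype.card (Fin ℓ → {σ : N ≃ Fin (Fintype.card N) // σ ∈ compatPerms P}) : ℝ)
      ≤ α :=
  min_sample_size_bound_general c E P i hci ε α hε hα0 ℓ hℓ hsize
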